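/- Let U, Ũ ∈ ℝ^{p×K}, let m ≤ p, and suppose ‖U_{i·}‖₂² ≥ K/(μm) for all i ≤ m and U_{i·} = 0 for i > m, for some μ ≥ 1. Let q be the number of indices i ≤ m whose row norm ‖Ũ_{i·}‖₂ is not among the m largest row norms of Ũ. If ‖Ũ − U‖_F² ≤ ε, then q ≤ 16μm·ε/K. -/

import Mathlib

open Matrix

/-- Euclidean norm of the `i`-th row of a matrix. -/
noncomputable def rowNorm {p K : ℕ} (M : Matrix (Fin p) (Fin K) ℝ) (i : Fin p) : ℝ :=
  Real.sqrt (∑ j, M i j ^ 2)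

/-- Frobenius norm of a matrix. -/
noncomputable def frobNorm {p K : ℕ} (M : Matrix (Fin p) (Fin K) ℝ) : ℝ :=
  Real.sqrt (∑ i, ∑ j, M i j ^ 2)

/-!
Call a row `i < m` displaced if at least `m` rows of `Ũ` have a strictly larger norm, and let `C`
be the set of rows exceeded by fewer than `m` others. Then `C` has at least `m` elements, none of
them displaced, and each at least as long in `Ũ` as every displaced row; so `C` contains at least
as many null rows (`i ≥ m`) as there are displaced rows. With `2Δ` at most the
norm of each row `i < m` of `U`, either every displaced row moved by at least `Δ`, or one
of them did not; then its norm in `Ũ` exceeds `Δ`, hence so does the norm of every row of `C`,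
and each null row of `C` moved by more than `Δ`. Either way there are at least as many rows of
`Ũ - U` of norm `≥ Δ` as displaced rows, and each contributes `Δ²` to `‖Ũ - U‖_F²`.
-/

open Finset

namespace Finset

theorem card_le_card_sdiff_of_disjoint {α : Type*} [DecidableEq α] {s t u : Finset α}
    (hst : s ⊆ t) (hsu : Disjoint s u) (htu : #t ≤ #u) : #s ≤ #(u \ t) := by
  have hinter : u ∩ t ⊆ t \ s := fun x hx =>
    mem_sdiff.2 ⟨(mem_inter.1 hx).2, fun hxs => disjoint_left.1 hsu hxs (mem_inter.1 hx).1⟩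
  have hinter_card := card_le_card hinter
  rw [card_sdiff_of_subset hst] at hinter_card
  have hu := card_sdiff_add_card_inter u t
  have hst_card := card_le_card hst
  omega

end Finset

section TopIndices

variable {ι α : Type*} [Fintype ι] [LinearOrder α]

def topIndices (f : ι → α) (m : ℕ) : Finset ι :=
  {i | #{j | f i < f j} < m}

theorem le_card_topIndices [DecidableEq ι] (f : ι → α) {m : ℕ} (hm : m ≤ Fintype.card ι) :
    m ≤ #(topIndices f m) := by
  by_contra! hlt
  have hne : (topIndices f m)ᶜ.Nonempty := by
    rw [← card_pos, card_compl]
    omega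
  obtain ⟨a, ha, hmax⟩ := exists_max_image _ f hne
  have hsub : ({k | f a < f k} : Finset ι) ⊆ topIndices f m := fun k hk => by
    by_contra hk'
    exact (hmax k (mem_compl.2 hk')).not_gt (mem_filter.1 hk).2
  have ha' : m ≤ #{k | f a < f k} := by simpa [topIndices] using ha
  exact (ha'.trans (card_le_card hsub)).not_gt hlt

theorem apply_le_of_notMem_topIndices {f : ι → α} {m : ℕ} {i c : ι}
    (hi : i ∉ topIndices f m) (hc : c ∈ topIndices f m) : f i ≤ f c := by
  by_contra! hlt
  have hsub : ({k | f i < f k} : Finset ι) ⊆ ({k | f c < f k} : Finset ι) := fun k hk => by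
    simp only [mem_filter, mem_univ, true_and] at hk ⊢
    exact hlt.trans hk
  simp only [topIndices, mem_filter, mem_univ, true_and, not_lt] at hi hc
  exact (hi.trans (card_le_card hsub)).not_gt hc

end TopIndices

section RowNorm

variable {p K : ℕ}

theorem rowNorm_eq_norm (M : Matrix (Fin p) (Fin K) ℝ) (i : Fin p) :
    rowNorm M i = ‖WithLp.toLp 2 (M i)‖ := by
  simp [rowNorm, EuclideanSpace.norm_eq, sq_abs]

theorem rowNorm_nonneg (M : Matrix (Fin p) (Fin K) ℝ) (i : Fin p) : 0 ≤ rowNorm M i :=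
  Real.sqrt_nonneg _

theorem rowNorm_le_rowNorm_add_rowNorm_sub (A B : Matrix (Fin p) (Fin K) ℝ) (i : Fin p) :
    rowNorm B i ≤ rowNorm A i + rowNorm (A - B) i := by
  rw [rowNorm_eq_norm, rowNorm_eq_norm, rowNorm_eq_norm]
  exact norm_le_norm_add_norm_sub _ _

theorem rowNorm_sub_of_row_eq_zero {A B : Matrix (Fin p) (Fin K) ℝ} {i : Fin p}
    (hB : ∀ j, B i j = 0) : rowNorm (A - B) i = rowNorm A i := by
  simp [rowNorm, hB]

theorem frobNorm_sq (M : Matrix (Fin p) (Fin K) ℝ) :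
    frobNorm M ^ 2 = ∑ i, rowNorm M i ^ 2 := by
  rw [frobNorm, Real.sq_sqrt (by positivity)]
  exact sum_congr rfl fun i _ => (Real.sq_sqrt (by positivity)).symm

theorem card_mul_sq_le_frobNorm_sq (M : Matrix (Fin p) (Fin K) ℝ) {Δ : ℝ} (hΔ : 0 ≤ Δ) :
    #{i | Δ ≤ rowNorm M i} * Δ ^ 2 ≤ frobNorm M ^ 2 := by
  calc (#{i | Δ ≤ rowNorm M i} : ℝ) * Δ ^ 2 = ∑ i ∈ {i | Δ ≤ rowNorm M i}, Δ ^ 2 := by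
        rw [sum_const, nsmul_eq_mul]
    _ ≤ ∑ i ∈ {i | Δ ≤ rowNorm M i}, rowNorm M i ^ 2 :=
        sum_le_sum fun i hi => pow_le_pow_left₀ hΔ (mem_filter.1 hi).2 2
    _ ≤ ∑ i, rowNorm M i ^ 2 :=
        sum_le_sum_of_subset_of_nonneg (subset_univ _) fun i _ _ => sq_nonneg _
    _ = frobNorm M ^ 2 := (frobNorm_sq M).symm

theorem card_displaced_le_card_deviating {m : ℕ} (hmp : m ≤ p) {Δ : ℝ}
    {U Ut : Matrix (Fin p) (Fin K) ℝ}
    (hU : ∀ i : Fin p, i.val < m → 2 * Δ ≤ rowNorm U i)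
    (hzero : ∀ i : Fin p, m ≤ i.val → ∀ j, U i j = 0) :
    #{i | i.val < m ∧ m ≤ #{j | rowNorm Ut i < rowNorm Ut j}} ≤ #{i | Δ ≤ rowNorm (Ut - U) i} := by
  set S : Finset (Fin p) := {i | i.val < m ∧ m ≤ #{j | rowNorm Ut i < rowNorm Ut j}}
  set F : Finset (Fin p) := {i | i.val < m}
  set C := topIndices (rowNorm Ut) m
  have hSF : S ⊆ F := fun i hi => by
    simp only [S, F, mem_filter, mem_univ, true_and] at hi ⊢
    exact hi.1
  have hSC : Disjoint S C := disjoint_left.2 fun i hiS hiC => by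
    simp only [S, C, topIndices, mem_filter, mem_univ, true_and] at hiS hiC
    omega
  have hFC : #F ≤ #C := by
    rw [Fin.card_filter_val_lt, min_eq_right hmp]
    exact le_card_topIndices _ (by simpa using hmp)
  have hmatch : #S ≤ #(C \ F) := card_le_card_sdiff_of_disjoint hSF hSC hFC
  by_cases hdev : ∀ i ∈ S, Δ ≤ rowNorm (Ut - U) i
  · exact card_le_card fun i hi => mem_filter.2 ⟨mem_univ _, hdev i hi⟩
  push Not at hdev
  obtain ⟨i₀, hi₀S, hi₀⟩ := hdev
  have hi₀C : i₀ ∉ C := disjoint_left.1 hSC hi₀S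
  have hlong : Δ < rowNorm Ut i₀ := by
    have htri := rowNorm_le_rowNorm_add_rowNorm_sub Ut U i₀
    have hU₀ := hU i₀ (by simpa [F] using hSF hi₀S)
    linarith
  refine hmatch.trans (card_le_card fun c hc => ?_)
  obtain ⟨hcC, hcF⟩ := mem_sdiff.1 hc
  have hmc : m ≤ c.val := by simpa [F] using hcF
  rw [mem_filter, rowNorm_sub_of_row_eq_zero (hzero c hmc)]
  exact ⟨mem_univ _, hlong.le.trans (apply_le_of_notMem_topIndices hi₀C hcC)⟩

end RowNorm

theorem stmt18 (p K m : ℕ) (hK0 : 0 < K) (hKm : K ≤ m) (hmp : m ≤ p)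
    (μ : ℝ) (hμ : 1 ≤ μ)
    (U Ut : Matrix (Fin p) (Fin K) ℝ)
    (hlow : ∀ i : Fin p, i.val < m → (K : ℝ) / (μ * m) ≤ rowNorm U i ^ 2)
    (hzero : ∀ i : Fin p, m ≤ i.val → ∀ j : Fin K, U i j = 0)
    (ε : ℝ) (hε : frobNorm (Ut - U) ^ 2 ≤ ε) :
    ((Finset.univ.filter fun i : Fin p => i.val < m ∧
        m ≤ (Finset.univ.filter fun j : Fin p =>
          rowNorm Ut i < rowNorm Ut j).card).card : ℝ)
      ≤ 16 * μ * m * ε / K := by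
  have hK : (0 : ℝ) < K := by exact_mod_cast hK0
  have hm : (0 : ℝ) < m := by exact_mod_cast hK0.trans_le hKm
  have hμm : 0 < μ * m := mul_pos (by linarith) hm
  set Δ := √(K / (μ * m)) / 4 with hΔdef
  have hΔ : 0 ≤ Δ := by positivity
  have hΔsq : Δ ^ 2 = K / (16 * μ * m) := by
    rw [div_pow, Real.sq_sqrt (div_pos hK hμm).le]
    field_simp
    ring
  have h2Δ : ∀ i : Fin p, i.val < m → 2 * Δ ≤ rowNorm U i := fun i hi =>
    calc 2 * Δ ≤ √(K / (μ * m)) := by rw [hΔdef]; linarith [Real.sqrt_nonneg (K / (μ * m))]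
      _ ≤ √(rowNorm U i ^ 2) := Real.sqrt_le_sqrt (hlow i hi)
      _ = rowNorm U i := Real.sqrt_sq (rowNorm_nonneg U i)
  have hcount := card_displaced_le_card_deviating (Ut := Ut) hmp h2Δ hzero
  have hbound := (mul_le_mul_of_nonneg_right (Nat.cast_le (α := ℝ).2 hcount) (sq_nonneg Δ)).trans
    ((card_mul_sq_le_frobNorm_sq _ hΔ).trans hε)
  rw [hΔsq, mul_div, div_le_iff₀ (by positivity)] at hbound
  rw [le_div_iff₀ hK]
  linarith
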